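/- Let ν > 0, g > 0, ν' = √(2ν), and define for c ∈ ℝ the energy E(c) = ν log(2/√(2πν)) − ν( f(c/ν') + (1/4) f'(c/ν')² ) + g( √(ν/2) f'(c/ν') + ν' (c/ν') ), where f(t) = log(1 + erf(t)). Then E has a unique critical point on ℝ, and it is a global minimum of E. -/

import Mathlib

open Real MeasureTheory

/-- The error function `erf x = (2/√π) ∫₀ˣ exp(−t²) dt`. -/
noncomputable def erf (x : ℝ) : ℝ := (2 / Real.sqrt Real.pi) * ∫ t in (0:ℝ)..x, Real.exp (-t^2)

/-- `f(t) = log(1 + erf t)`. -/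
noncomputable def fErf (t : ℝ) : ℝ := Real.log (1 + erf t)

/-- `f'(t) = (2/√π) exp(−t²)/(1 + erf t)`. -/
noncomputable def fErf' (t : ℝ) : ℝ := (2 / Real.sqrt Real.pi) * Real.exp (-t^2) / (1 + erf t)

/-- The reduced energy on the family of truncated Gaussians,
`E(c) = ν log(2/√(2πν)) − ν(f(t) + (1/4)f'(t)²) + g(√(ν/2) f'(t) + √(2ν) t)`,
with `t = c/√(2ν)`. -/
noncomputable def Eenergy (ν g c : ℝ) : ℝ :=
  ν * Real.log (2 / Real.sqrt (2 * Real.pi * ν))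
    - ν * (fErf (c / Real.sqrt (2 * ν)) + (1/4) * (fErf' (c / Real.sqrt (2 * ν))) ^ 2)
    + g * (Real.sqrt (ν / 2) * fErf' (c / Real.sqrt (2 * ν))
        + Real.sqrt (2 * ν) * (c / Real.sqrt (2 * ν)))

/-!
With `t = c/√(2ν)` and `y = f'(t)`, one has `f''(t) = -y(2t + y)` and
`E'(c) = (1 + f''(t)/2) (g - √(ν/2) y)`. With `F(t) = ∫_{-∞}^t e^{-s²} ds` we have
`y = e^{-t²}/F(t)`, so `2t + y > 0` and `1 + f''/2 > 0` amount to the positivity of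
`2tF + e^{-t²}` and of `F² - t e^{-t²} F - e^{-t²}²/2`. Both vanish at `-∞` and have positive
derivatives (`2F`, resp. `e^{-t²}(1 + 2t²)(F + t e^{-t²}/(1 + 2t²))`, where the last factor is
positive for the same reason). Hence `f'` decreases strictly from `+∞` (as `y > -2t`) to `0`, so
the second factor of `E'` is strictly increasing in `c` and vanishes exactly once, where `E'`
changes sign from negative to positive.
-/

open Set Filter Topology

lemma pos_of_hasDerivAt_pos_of_tendsto_atBot {h h' : ℝ → ℝ} (hd : ∀ t, HasDerivAt h (h' t) t)
    (hpos : ∀ t, 0 < h' t) (hlim : Tendsto h atBot (𝓝 0)) (t : ℝ) : 0 < h t := by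
  have hmono : StrictMono h := strictMono_of_hasDerivAt_pos hd hpos
  have : 0 ≤ h (t - 1) :=
    le_of_tendsto hlim (by
      filter_upwards [eventually_le_atBot (t - 1)] with s hs using hmono.monotone hs)
  exact this.trans_lt (hmono (by linarith))

section SignChange

variable {f D m : ℝ → ℝ} {c₀ : ℝ}

lemma le_of_hasDerivAt_pos_mul_strictMono (hf : ∀ x, HasDerivAt f (D x * m x) x)
    (hD : ∀ x, 0 < D x) (hm : StrictMono m) (hc₀ : m c₀ = 0) (c : ℝ) : f c₀ ≤ f c := by
  have hcont : Continuous f := continuous_iff_continuousAt.2 fun x => (hf x).continuousAt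
  rcases le_total c c₀ with hc | hc
  · refine antitoneOn_of_hasDerivWithinAt_nonpos (convex_Iic c₀) hcont.continuousOn
      (fun x _ => (hf x).hasDerivWithinAt) (fun x hx => ?_) hc self_mem_Iic hc
    rw [interior_Iic] at hx
    exact mul_nonpos_of_nonneg_of_nonpos (hD x).le (hc₀ ▸ (hm hx).le)
  · refine monotoneOn_of_hasDerivWithinAt_nonneg (convex_Ici c₀) hcont.continuousOn
      (fun x _ => (hf x).hasDerivWithinAt) (fun x hx => ?_) self_mem_Ici hc hc
    rw [interior_Ici] at hx
    exact mul_nonneg (hD x).le (hc₀ ▸ (hm hx).le)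

lemma eq_of_hasDerivAt_pos_mul_strictMono (hf : ∀ x, HasDerivAt f (D x * m x) x)
    (hD : ∀ x, 0 < D x) (hm : StrictMono m) (hc₀ : m c₀ = 0) {c : ℝ} (hc : deriv f c = 0) :
    c = c₀ := by
  rw [(hf c).deriv, mul_eq_zero] at hc
  exact hm.injective (hc.resolve_left (hD c).ne' ▸ hc₀.symm)

end SignChange

lemma integrable_exp_neg_sq : Integrable fun s : ℝ => exp (-s ^ 2) := by
  simpa using integrable_exp_neg_mul_sq (b := 1) one_pos

lemma hasDerivAt_exp_neg_sq (t : ℝ) :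
    HasDerivAt (fun t : ℝ => exp (-t ^ 2)) (-2 * t * exp (-t ^ 2)) t := by
  convert ((hasDerivAt_pow 2 t).fun_neg).exp using 1
  push_cast
  ring

lemma tendsto_exp_neg_sq_atTop : Tendsto (fun t : ℝ => exp (-t ^ 2)) atTop (𝓝 0) :=
  tendsto_exp_atBot.comp (tendsto_neg_atTop_atBot.comp (tendsto_pow_atTop two_ne_zero))

lemma tendsto_exp_neg_sq_atBot : Tendsto (fun t : ℝ => exp (-t ^ 2)) atBot (𝓝 0) := by
  simpa [Function.comp_def] using tendsto_exp_neg_sq_atTop.comp tendsto_neg_atBot_atTop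

lemma tendsto_mul_exp_atBot : Tendsto (fun t : ℝ => t * exp t) atBot (𝓝 0) := by
  simpa [Function.comp_def] using
    ((tendsto_pow_mul_exp_neg_atTop_nhds_zero 1).comp tendsto_neg_atBot_atTop).neg

noncomputable def gaussIic (t : ℝ) : ℝ := ∫ s in Iic t, exp (-s ^ 2)

lemma gaussIic_eq_add_intervalIntegral (t : ℝ) :
    gaussIic t = gaussIic 0 + ∫ s in (0 : ℝ)..t, exp (-s ^ 2) := by
  rw [← intervalIntegral.integral_Iic_sub_Iic integrable_exp_neg_sq.integrableOn
    integrable_exp_neg_sq.integrableOn, gaussIic, gaussIic]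
  ring

lemma hasDerivAt_intervalIntegral_exp_neg_sq (t : ℝ) :
    HasDerivAt (fun u => ∫ s in (0 : ℝ)..u, exp (-s ^ 2)) (exp (-t ^ 2)) t :=
  intervalIntegral.integral_hasDerivAt_right integrable_exp_neg_sq.intervalIntegrable
    ((by fun_prop : Continuous fun s : ℝ => exp (-s ^ 2)).stronglyMeasurableAtFilter _ _)
    (by fun_prop)

lemma hasDerivAt_gaussIic (t : ℝ) : HasDerivAt gaussIic (exp (-t ^ 2)) t := by
  rw [show gaussIic = _ from funext gaussIic_eq_add_intervalIntegral]
  exact (hasDerivAt_intervalIntegral_exp_neg_sq t).const_add _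

lemma tendsto_gaussIic_atBot : Tendsto gaussIic atBot (𝓝 0) := by
  have h := (tendsto_const_nhds (x := gaussIic 0)).sub
    (intervalIntegral_tendsto_integral_Iic 0 integrable_exp_neg_sq.integrableOn tendsto_id)
  rw [← gaussIic, sub_self] at h
  refine h.congr fun t => ?_
  rw [gaussIic_eq_add_intervalIntegral t, intervalIntegral.integral_symm, id]
  ring

lemma gaussIic_pos (t : ℝ) : 0 < gaussIic t :=
  pos_of_hasDerivAt_pos_of_tendsto_atBot hasDerivAt_gaussIic (fun _ => exp_pos _)
    tendsto_gaussIic_atBot t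

lemma gaussIic_strictMono : StrictMono gaussIic :=
  strictMono_of_hasDerivAt_pos hasDerivAt_gaussIic fun _ => exp_pos _

lemma gaussIic_le_exp {t : ℝ} (ht : t ≤ -1) : gaussIic t ≤ exp t := by
  rw [← integral_exp_Iic t]
  refine setIntegral_mono_on integrable_exp_neg_sq.integrableOn (integrableOn_exp_Iic t)
    measurableSet_Iic fun s hs => exp_le_exp.2 ?_
  nlinarith [mem_Iic.1 hs]

lemma tendsto_mul_gaussIic_atBot : Tendsto (fun t => t * gaussIic t) atBot (𝓝 0) := by
  refine squeeze_zero_norm' (a := fun t => -(t * exp t)) ?_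
    (by simpa using tendsto_mul_exp_atBot.neg)
  filter_upwards [eventually_le_atBot (-1 : ℝ)] with t ht
  rw [norm_mul, norm_of_nonpos (by linarith), norm_of_nonneg (gaussIic_pos t).le]
  nlinarith [gaussIic_le_exp ht]

lemma gaussIic_zero : gaussIic 0 = √π / 2 := by
  have hsplit := integral_add_compl (μ := volume) (measurableSet_Iic (a := (0 : ℝ)))
    integrable_exp_neg_sq
  have hsym : ∫ s in Ioi (0 : ℝ), exp (-s ^ 2) = gaussIic 0 := by
    rw [gaussIic, ← neg_zero, ← integral_comp_neg_Ioi]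
    simp
  have htot : ∫ s : ℝ, exp (-s ^ 2) = √π := by simpa using integral_gaussian 1
  rw [compl_Iic, hsym, htot] at hsplit
  rw [gaussIic] at *
  linarith

lemma one_add_erf_eq (t : ℝ) : 1 + erf t = 2 / √π * gaussIic t := by
  have : √π ≠ 0 := (sqrt_pos.2 pi_pos).ne'
  rw [erf, gaussIic_eq_add_intervalIntegral t, gaussIic_zero]
  field_simp

lemma one_add_erf_pos (t : ℝ) : 0 < 1 + erf t := by
  have := gaussIic_pos t
  have := sqrt_pos.2 pi_pos
  rw [one_add_erf_eq]
  positivity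

lemma two_mul_mul_gaussIic_add_exp_pos (t : ℝ) : 0 < 2 * t * gaussIic t + exp (-t ^ 2) := by
  refine pos_of_hasDerivAt_pos_of_tendsto_atBot (h := fun t => 2 * t * gaussIic t + exp (-t ^ 2))
    (h' := fun t => 2 * gaussIic t) (fun t => ?_)
    (fun t => by linarith [gaussIic_pos t]) ?_ t
  · refine ((((hasDerivAt_id t).const_mul 2).mul (hasDerivAt_gaussIic t)).add
      (hasDerivAt_exp_neg_sq t)).congr_deriv ?_
    simp only [id_eq]
    ring
  · simpa [mul_assoc] using (tendsto_mul_gaussIic_atBot.const_mul 2).add tendsto_exp_neg_sq_atBot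

lemma tendsto_mul_exp_neg_sq_div_atBot :
    Tendsto (fun t : ℝ => t * exp (-t ^ 2) / (1 + 2 * t ^ 2)) atBot (𝓝 0) := by
  refine squeeze_zero_norm (fun t => ?_) tendsto_exp_neg_sq_atBot
  have hden : 0 < 1 + 2 * t ^ 2 := by positivity
  rw [norm_div, norm_mul, norm_of_nonneg (exp_pos _).le, norm_of_nonneg hden.le,
    div_le_iff₀ hden]
  have : ‖t‖ ≤ 1 + 2 * t ^ 2 := by nlinarith [sq_nonneg (2 * |t| - 1), sq_abs t, norm_eq_abs t]
  nlinarith [exp_pos (-t ^ 2)]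

lemma gaussIic_add_mul_exp_neg_sq_div_pos (t : ℝ) :
    0 < gaussIic t + t * exp (-t ^ 2) / (1 + 2 * t ^ 2) := by
  refine pos_of_hasDerivAt_pos_of_tendsto_atBot
    (h := fun t => gaussIic t + t * exp (-t ^ 2) / (1 + 2 * t ^ 2))
    (h' := fun t => 2 * exp (-t ^ 2) / (1 + 2 * t ^ 2) ^ 2) (fun t => ?_)
    (fun t => by positivity)
    (by simpa using tendsto_gaussIic_atBot.add tendsto_mul_exp_neg_sq_div_atBot) t
  have hden : (1 + 2 * t ^ 2) ≠ 0 := by positivity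
  refine ((hasDerivAt_gaussIic t).add (((hasDerivAt_id t).mul (hasDerivAt_exp_neg_sq t)).div
    (((hasDerivAt_pow 2 t).const_mul 2).const_add 1) hden)).congr_deriv ?_
  simp only [id_eq, Pi.mul_apply]
  field_simp
  push_cast
  ring

lemma gaussIic_sq_sub_pos (t : ℝ) :
    0 < gaussIic t ^ 2 - t * exp (-t ^ 2) * gaussIic t - exp (-t ^ 2) ^ 2 / 2 := by
  refine pos_of_hasDerivAt_pos_of_tendsto_atBot
    (h := fun t => gaussIic t ^ 2 - t * exp (-t ^ 2) * gaussIic t - exp (-t ^ 2) ^ 2 / 2)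
    (h' := fun t => exp (-t ^ 2) * (1 + 2 * t ^ 2) *
      (gaussIic t + t * exp (-t ^ 2) / (1 + 2 * t ^ 2))) (fun t => ?_)
    (fun t => by have := gaussIic_add_mul_exp_neg_sq_div_pos t; positivity) ?_ t
  · have hden : (1 + 2 * t ^ 2) ≠ 0 := by positivity
    refine ((((hasDerivAt_gaussIic t).pow 2).sub (((hasDerivAt_id t).mul
      (hasDerivAt_exp_neg_sq t)).mul (hasDerivAt_gaussIic t))).sub
      (((hasDerivAt_exp_neg_sq t).pow 2).div_const 2)).congr_deriv ?_
    simp only [id_eq, Pi.mul_apply]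
    field_simp
    push_cast
    ring
  · have h := ((tendsto_gaussIic_atBot.pow 2).sub
      (tendsto_exp_neg_sq_atBot.mul tendsto_mul_gaussIic_atBot)).sub
      ((tendsto_exp_neg_sq_atBot.pow 2).div_const 2)
    simp only [ne_eq, OfNat.ofNat_ne_zero, not_false_eq_true, zero_pow, mul_zero, sub_zero,
      zero_div] at h
    exact h.congr fun t => by ring

lemma fErf'_eq_div (t : ℝ) : fErf' t = exp (-t ^ 2) / gaussIic t := by
  have : √π ≠ 0 := (sqrt_pos.2 pi_pos).ne'
  have := (gaussIic_pos t).ne'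
  rw [fErf', one_add_erf_eq]
  field_simp

lemma fErf'_pos (t : ℝ) : 0 < fErf' t := by
  rw [fErf'_eq_div]
  exact div_pos (exp_pos _) (gaussIic_pos t)

lemma hasDerivAt_fErf (t : ℝ) : HasDerivAt fErf (fErf' t) t :=
  (((hasDerivAt_intervalIntegral_exp_neg_sq t).const_mul (2 / √π)).const_add 1).log
    (one_add_erf_pos t).ne'

lemma hasDerivAt_fErf' (t : ℝ) : HasDerivAt fErf' (-fErf' t * (2 * t + fErf' t)) t := by
  rw [show fErf' = fun t => exp (-t ^ 2) / gaussIic t from funext fErf'_eq_div]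
  refine ((hasDerivAt_exp_neg_sq t).div (hasDerivAt_gaussIic t) (gaussIic_pos t).ne').congr_deriv ?_
  have := (gaussIic_pos t).ne'
  field_simp
  ring

lemma neg_two_mul_lt_fErf' (t : ℝ) : -2 * t < fErf' t := by
  rw [fErf'_eq_div, lt_div_iff₀ (gaussIic_pos t)]
  linarith [two_mul_mul_gaussIic_add_exp_pos t]

lemma fErf'_strictAnti : StrictAnti fErf' :=
  strictAnti_of_hasDerivAt_neg hasDerivAt_fErf' fun t =>
    mul_neg_of_neg_of_pos (neg_neg_of_pos (fErf'_pos t)) (by linarith [neg_two_mul_lt_fErf' t])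

lemma tendsto_fErf'_atTop : Tendsto fErf' atTop (𝓝 0) := by
  refine squeeze_zero' (Eventually.of_forall fun t => (fErf'_pos t).le) ?_
    (by simpa using tendsto_exp_neg_sq_atTop.div_const (gaussIic 0))
  filter_upwards [eventually_ge_atTop 0] with t ht
  rw [fErf'_eq_div]
  exact div_le_div_of_nonneg_left (exp_pos _).le (gaussIic_pos 0)
    (gaussIic_strictMono.monotone ht)

lemma exists_fErf'_eq {κ : ℝ} (hκ : 0 < κ) : ∃ t, fErf' t = κ := by
  obtain ⟨b, hyb, hb⟩ := ((tendsto_fErf'_atTop.eventually_lt_const hκ).and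
    (eventually_ge_atTop (-κ / 2))).exists
  have hya : κ < fErf' (-κ / 2) := by linarith [neg_two_mul_lt_fErf' (-κ / 2)]
  obtain ⟨t, -, ht⟩ := intermediate_value_Icc' hb
    (fun x _ => (hasDerivAt_fErf' x).continuousAt.continuousWithinAt) ⟨hyb.le, hya.le⟩
  exact ⟨t, ht⟩

lemma one_sub_mul_fErf'_sub_sq_pos (t : ℝ) : 0 < 1 - t * fErf' t - fErf' t ^ 2 / 2 := by
  have hF := gaussIic_pos t
  have : 1 - t * fErf' t - fErf' t ^ 2 / 2
      = (gaussIic t ^ 2 - t * exp (-t ^ 2) * gaussIic t - exp (-t ^ 2) ^ 2 / 2) / gaussIic t ^ 2 := by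
    rw [fErf'_eq_div]
    field_simp
  rw [this]
  exact div_pos (gaussIic_sq_sub_pos t) (by positivity)

lemma hasDerivAt_Eenergy {ν : ℝ} (hν : 0 < ν) (g c : ℝ) :
    HasDerivAt (Eenergy ν g)
      ((1 - c / √(2 * ν) * fErf' (c / √(2 * ν)) - fErf' (c / √(2 * ν)) ^ 2 / 2)
        * (g - √(ν / 2) * fErf' (c / √(2 * ν)))) c := by
  set s := √(2 * ν)
  have hs : 0 < s := sqrt_pos.2 (by linarith)
  have hs2 : s ^ 2 = 2 * ν := sq_sqrt (by linarith)
  have hp : √(ν / 2) = s / 2 := by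
    rw [show ν / 2 = (s / 2) ^ 2 by rw [div_pow, hs2]; ring, sqrt_sq (by positivity)]
  set t := c / s
  have hT : HasDerivAt (fun c : ℝ => c / s) (1 / s) c := by
    simpa using (hasDerivAt_id c).div_const s
  have hf := (hasDerivAt_fErf t).comp c hT
  have hf' := (hasDerivAt_fErf' t).comp c hT
  refine ((((hasDerivAt_const c (ν * log (2 / √(2 * π * ν)))).sub
    ((hf.add ((hf'.pow 2).const_mul (1 / 4))).const_mul ν)).add
    (((hf'.const_mul (√(ν / 2))).add (hT.const_mul s)).const_mul g))).congr_deriv ?_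
  rw [hp, show ν = s ^ 2 / 2 by rw [hs2]; ring]
  simp only [Function.comp_apply]
  field_simp
  ring

/-- for every `ν > 0` and `g > 0`, `E` has a unique critical point on `ℝ`,
and it is a global minimum of `E`. -/
theorem stmt_16 (ν g : ℝ) (hν : 0 < ν) (hg : 0 < g) :
    ∃ c : ℝ, deriv (Eenergy ν g) c = 0
      ∧ (∀ c' : ℝ, deriv (Eenergy ν g) c' = 0 → c' = c)
      ∧ (∀ c' : ℝ, Eenergy ν g c ≤ Eenergy ν g c') := by
  have hs : 0 < √(2 * ν) := sqrt_pos.2 (by linarith)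
  have hp : 0 < √(ν / 2) := sqrt_pos.2 (by linarith)
  obtain ⟨t₀, ht₀⟩ := exists_fErf'_eq (div_pos hg hp)
  have hm : StrictMono fun c => g - √(ν / 2) * fErf' (c / √(2 * ν)) := fun a b hab => by
    have := fErf'_strictAnti (div_lt_div_of_pos_right hab hs)
    dsimp only
    gcongr
  have hc₀ : g - √(ν / 2) * fErf' (√(2 * ν) * t₀ / √(2 * ν)) = 0 := by
    rw [mul_div_cancel_left₀ _ hs.ne', ht₀, mul_div_cancel₀ _ hp.ne', sub_self]
  have hf := hasDerivAt_Eenergy hν g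
  have hD := fun c => one_sub_mul_fErf'_sub_sq_pos (c / √(2 * ν))
  refine ⟨√(2 * ν) * t₀, ?_, fun c hc => eq_of_hasDerivAt_pos_mul_strictMono hf hD hm hc₀ hc,
    le_of_hasDerivAt_pos_mul_strictMono hf hD hm hc₀⟩
  rw [(hf _).deriv, hc₀, mul_zero]
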